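/- arXiv:0901.1506 — 2 statements merged into one kernel-verified Lean document; each statement's English description precedes it below -/
import Mathlib

section
/- For v, w in the Weyl group W, the function ψ^v defined by ψ^v(T_w) = δ_{v,w} satisfies ψ^v(w) = 0 unless v ≤ w in Bruhat order. -/
/-!
STATEMENT 5: For `v, w` in the Weyl group `W`, the function `ψ^v` defined by
`ψ^v(T_w) = δ_{v,w}` satisfies `ψ^v(w) = 0` unless `v ≤ w` in Bruhat order.

Setup.  `W` is the Weyl group of a Coxeter system `cs`.  `F` plays the role of
the fraction field `Q(T)` of `R(T) = ℤ[P]`, on which `W` acts by ring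
automorphisms (`MulSemiringAction`).  The K-NilHecke ring `𝕂 ⊆ 𝕂_{Q(T)}` is
realized faithfully by additive operators on `F`: `q ∈ Q(T)` acts by left
multiplication `mulOp q`, a group element `w` acts by `grpOp w`, and
`T_i = (1 - e^{α_i})⁻¹ (r_i - 1)` where `a i = e^{α_i}`; `T_w` is the product
of the `T_i` along a reduced word for `w`.  `Pair` is the evaluation pairing
`⟨·,·⟩ : 𝕂_{Q(T)} × Fun(W,Q(T)) → Q(T)`, left `Q(T)`-linear with
`⟨w, ψ⟩ = ψ(w)`, and `ψ^v` is the unique function with `⟨T_u, ψ^v⟩ = δ_{v,u}`.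
Bruhat order: `v ≤ w` iff some reduced word for `w` has a subword with
product `v`.
-/

open scoped Classical

noncomputable section

/-- Left multiplication by `q : F` as an additive endomorphism of `F`. -/
def mulOp {F : Type*} [Field F] (q : F) : Module.End ℤ F :=
  (AddMonoidHom.mulLeft q).toIntLinearMap

/-- The action of a group element `w : W` on `F` as an additive endomorphism. -/
def grpOp {W F : Type*} [Field F] [Group W] [MulSemiringAction W F] (w : W) :
    Module.End ℤ F :=
  (DistribMulAction.toAddMonoidHom F w).toIntLinearMap

/-- The Demazure element `T = (1 - a)⁻¹ (w - 1)` (with `a = e^{α_i}`,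
`w = r_i`) as an operator on `F`. -/
def TOp {W F : Type*} [Field F] [Group W] [MulSemiringAction W F]
    (a : F) (w : W) : Module.End ℤ F :=
  mulOp (1 - a)⁻¹ * (grpOp w - 1)

/-- `T_ω = T_{i_1} ⋯ T_{i_N}` for a word `ω = (i_1, …, i_N)`. -/
def Tword {B W F : Type*} [Field F] [Group W] [MulSemiringAction W F]
    {M : CoxeterMatrix B} (cs : CoxeterSystem M W) (a : B → F) (ω : List B) :
    Module.End ℤ F :=
  (ω.map (fun i => TOp (a i) (cs.simple i))).prod

/-- Bruhat order: `v ≤ w` iff some reduced word for `w` admits a subword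
whose product is `v`. -/
def BruhatLE {B W : Type*} [Group W] {M : CoxeterMatrix B}
    (cs : CoxeterSystem M W) (v w : W) : Prop :=
  ∃ ω : List B, cs.IsReduced ω ∧ cs.wordProd ω = w ∧
    ∃ ω' : List B, ω'.Sublist ω ∧ cs.wordProd ω' = v

/-!
Fix a reduced word `ω` for `w` and let `G ω` (`reducedSubwordSpan`) be the additive group
spanned by the operators `q T_τ`, `q ∈ Q(T)`, `τ` a reduced subword of `ω`. Since
`r_i = (1 - e^{α_i}) T_i + 1`, induction on `ω` shows `w ∈ G ω` once left multiplication by `T_i`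
maps `G t` into `G (i :: t)`. On generators, `T_i q T_τ = (r_i q) T_{iτ} + q' T_τ`; when `iτ` is
not reduced, `T_τ = T_i T_{τ'}` for a reduced word `iτ'` of `π τ`, and `T_i² = c_i T_i` makes
`T_{iτ}` a multiple of `T_τ`. Finally `ψ^v` kills every `q T_τ` with `π τ ≠ v`, so it kills `w`
unless `v` is the product of a subword of `ω`.
-/

section Operators

variable {W F : Type*} [Field F] [Group W] [MulSemiringAction W F]

@[simp]
lemma mulOp_apply (q x : F) : mulOp q x = q * x := rfl

@[simp]
lemma grpOp_apply (u : W) (x : F) : grpOp u x = u • x := rfl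

lemma mulOp_mul (q r : F) : mulOp (q * r) = mulOp q * mulOp r := by
  ext x; simp [mul_assoc]

lemma mulOp_one : mulOp (1 : F) = 1 := by
  ext x; simp

lemma grpOp_one : grpOp (1 : W) = (1 : Module.End ℤ F) := by
  ext x; simp

lemma grpOp_mul (u v : W) : (grpOp (u * v) : Module.End ℤ F) = grpOp u * grpOp v := by
  ext x; simp [mul_smul]

lemma TOp_apply (a : F) (u : W) (x : F) : TOp a u x = (1 - a)⁻¹ * (u • x - x) := by
  simp [TOp]

lemma TOp_one_left (u : W) : TOp (1 : F) u = 0 := by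
  ext x; simp [TOp_apply]

lemma TOp_mul_mulOp (a q : F) (u : W) :
    TOp a u * mulOp q = mulOp (u • q) * TOp a u + mulOp ((1 - a)⁻¹ * (u • q - q)) := by
  ext x
  simp only [Module.End.mul_apply, LinearMap.add_apply, TOp_apply, mulOp_apply, smul_mul']
  ring

lemma TOp_mul_self (a : F) {u : W} (hu : u * u = 1) :
    TOp a u * TOp a u = mulOp (-((1 - a)⁻¹ + u • (1 - a)⁻¹)) * TOp a u := by
  ext x
  have huu : u • u • x = x := by rw [smul_smul, hu, one_smul]
  simp only [Module.End.mul_apply, TOp_apply, mulOp_apply, smul_sub, smul_mul', huu]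
  ring

lemma grpOp_eq_mulOp_mul_TOp_add_one {a : F} (ha : a ≠ 1) (u : W) :
    grpOp u = mulOp (1 - a) * TOp a u + 1 := by
  have h : mulOp (1 - a) * mulOp (1 - a)⁻¹ = 1 := by
    rw [← mulOp_mul, mul_inv_cancel₀ (sub_ne_zero.mpr ha.symm), mulOp_one]
  rw [TOp, ← mul_assoc, h, one_mul, sub_add_cancel]

end Operators

section Coxeter

variable {B W F : Type*} [Field F] [Group W] [MulSemiringAction W F]
  {M : CoxeterMatrix B} (cs : CoxeterSystem M W) (a : B → F)

lemma Tword_nil : Tword cs a [] = 1 := by simp [Tword]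

lemma Tword_cons (i : B) (ω : List B) :
    Tword cs a (i :: ω) = TOp (a i) (cs.simple i) * Tword cs a ω := by
  simp [Tword]

lemma Tword_singleton (i : B) : Tword cs a [i] = TOp (a i) (cs.simple i) := by
  rw [Tword_cons, Tword_nil, mul_one]

lemma CoxeterSystem.isReduced_nil : cs.IsReduced ([] : List B) := by
  simp [CoxeterSystem.IsReduced]

lemma CoxeterSystem.isReduced_singleton (i : B) : cs.IsReduced [i] := by
  simp [CoxeterSystem.IsReduced, cs.length_simple]

def reducedSubwordSpan (ω : List B) : AddSubgroup (Module.End ℤ F) :=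
  AddSubgroup.closure
    {mulOp q * Tword cs a τ | (q : F) (τ : List B) (_ : cs.IsReduced τ) (_ : τ.Sublist ω)}

def TwordWellDefined : Prop :=
  ∀ ω ω', cs.IsReduced ω → cs.IsReduced ω' → cs.wordProd ω = cs.wordProd ω' →
    Tword cs a ω = Tword cs a ω'

variable {cs a}

lemma mulOp_mul_Tword_mem_reducedSubwordSpan (q : F) {τ ω : List B} (hτ : cs.IsReduced τ)
    (hτω : τ.Sublist ω) : mulOp q * Tword cs a τ ∈ reducedSubwordSpan cs a ω :=
  AddSubgroup.subset_closure ⟨q, τ, hτ, hτω, rfl⟩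

lemma reducedSubwordSpan_mono {ω ω' : List B} (h : ω.Sublist ω') :
    reducedSubwordSpan cs a ω ≤ reducedSubwordSpan cs a ω' :=
  AddSubgroup.closure_mono fun _ ⟨q, τ, hτ, hτω, hx⟩ => ⟨q, τ, hτ, hτω.trans h, hx⟩

lemma Tword_cons_of_not_isReduced
    (hT : TwordWellDefined cs a) {i : B} {τ : List B} (hτ : cs.IsReduced τ)
    (hiτ : ¬ cs.IsReduced (i :: τ)) :
    Tword cs a (i :: τ) =
      mulOp (-((1 - a i)⁻¹ + cs.simple i • (1 - a i)⁻¹)) * Tword cs a τ := by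
  have hlen : cs.length (cs.simple i * cs.wordProd τ) + 1 = cs.length (cs.wordProd τ) := by
    refine (cs.length_simple_mul _ i).resolve_left fun h => hiτ ?_
    rw [CoxeterSystem.IsReduced, cs.wordProd_cons, h, hτ.eq, List.length_cons]
  obtain ⟨τ', hτ', hτ'_prod⟩ := cs.exists_isReduced (cs.simple i * cs.wordProd τ)
  have hprod : cs.wordProd (i :: τ') = cs.wordProd τ := by
    rw [cs.wordProd_cons, ← hτ'_prod, ← mul_assoc, cs.simple_mul_simple_self, one_mul]
  have hiτ' : cs.IsReduced (i :: τ') := by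
    rw [CoxeterSystem.IsReduced, hprod, List.length_cons, ← hτ'.eq, ← hτ'_prod, hlen]
  have hτ_eq : Tword cs a τ = TOp (a i) (cs.simple i) * Tword cs a τ' := by
    rw [← Tword_cons, hT _ _ hτ hiτ' hprod.symm]
  rw [Tword_cons, hτ_eq, ← mul_assoc, TOp_mul_self _ (cs.simple_mul_simple_self i), mul_assoc]

lemma mulOp_mul_Tword_cons_mem_reducedSubwordSpan (hT : TwordWellDefined cs a) (q : F) (i : B)
    {τ t : List B} (hτ : cs.IsReduced τ) (hτt : τ.Sublist t) :
    mulOp q * Tword cs a (i :: τ) ∈ reducedSubwordSpan cs a (i :: t) := by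
  by_cases hiτ : cs.IsReduced (i :: τ)
  · exact mulOp_mul_Tword_mem_reducedSubwordSpan q hiτ (hτt.cons_cons i)
  · rw [Tword_cons_of_not_isReduced hT hτ hiτ, ← mul_assoc, ← mulOp_mul]
    exact mulOp_mul_Tword_mem_reducedSubwordSpan _ hτ (hτt.cons i)

lemma mulOp_mul_TOp_mul_mem_reducedSubwordSpan (hT : TwordWellDefined cs a) (q : F) (i : B)
    {t : List B} {x : Module.End ℤ F} (hx : x ∈ reducedSubwordSpan cs a t) :
    mulOp q * TOp (a i) (cs.simple i) * x ∈ reducedSubwordSpan cs a (i :: t) := by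
  suffices reducedSubwordSpan cs a t ≤ (reducedSubwordSpan cs a (i :: t)).comap
      (AddMonoidHom.mulLeft (mulOp q * TOp (a i) (cs.simple i))) from this hx
  refine (AddSubgroup.closure_le _).2 ?_
  rintro _ ⟨r, τ, hτ, hτt, rfl⟩
  have hexpand : mulOp q * TOp (a i) (cs.simple i) * (mulOp r * Tword cs a τ) =
      mulOp (q * cs.simple i • r) * Tword cs a (i :: τ) +
        mulOp (q * ((1 - a i)⁻¹ * (cs.simple i • r - r))) * Tword cs a τ := by
    rw [mul_assoc, ← mul_assoc (TOp _ _), TOp_mul_mulOp, Tword_cons]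
    simp only [mulOp_mul, add_mul, mul_add, mul_assoc]
  simp only [SetLike.mem_coe, AddSubgroup.mem_comap, AddMonoidHom.coe_mulLeft, hexpand]
  exact add_mem (mulOp_mul_Tword_cons_mem_reducedSubwordSpan hT _ i hτ hτt)
    (mulOp_mul_Tword_mem_reducedSubwordSpan _ hτ (hτt.cons i))

lemma grpOp_wordProd_mem_reducedSubwordSpan (hT : TwordWellDefined cs a) (ha : ∀ i, a i ≠ 1)
    (ω : List B) : grpOp (cs.wordProd ω) ∈ reducedSubwordSpan cs a ω := by
  induction ω with
  | nil =>
    have h :=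
      mulOp_mul_Tword_mem_reducedSubwordSpan (a := a) 1 cs.isReduced_nil (List.nil_sublist [])
    rwa [Tword_nil, mulOp_one, mul_one, ← grpOp_one (W := W), ← cs.wordProd_nil] at h
  | cons i t ih =>
    rw [cs.wordProd_cons, grpOp_mul, grpOp_eq_mulOp_mul_TOp_add_one (ha i), add_mul, one_mul]
    exact add_mem (mulOp_mul_TOp_mul_mem_reducedSubwordSpan hT _ i ih)
      (reducedSubwordSpan_mono (List.sublist_cons_self i t) ih)

end Coxeter

theorem psi_vanishes_unless_bruhat_le
    {B W F : Type*} [Field F] [Group W] [MulSemiringAction W F]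
    {M : CoxeterMatrix B} (cs : CoxeterSystem M W) (a : B → F)
    (Tw : W → Module.End ℤ F)
    (hTw : ∀ ω : List B, cs.IsReduced ω → Tw (cs.wordProd ω) = Tword cs a ω)
    (Pair : Module.End ℤ F → (W → F) → F)
    (hPadd : ∀ x y φ, Pair (x + y) φ = Pair x φ + Pair y φ)
    (hPmul : ∀ (q : F) x φ, Pair (mulOp q * x) φ = q * Pair x φ)
    (hPgrp : ∀ (w : W) (φ : W → F), Pair (grpOp w) φ = φ w)
    (ψ : W → W → F)
    (hψ : ∀ v u : W, Pair (Tw u) (ψ v) = if v = u then 1 else 0) :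
    ∀ v w : W, ¬ BruhatLE cs v w → ψ v w = 0 := by
  intro v w hvw
  have hT : TwordWellDefined cs a := fun ω ω' hω hω' h => by
    rw [← hTw ω hω, ← hTw ω' hω', h]
  have hP0 : ∀ φ, Pair 0 φ = 0 := fun φ => by simpa using hPadd 0 0 φ
  -- if `a i = 1` then `T_i = 0`, contradicting `⟨T_{s_i}, ψ^{s_i}⟩ = 1`
  have ha : ∀ i, a i ≠ 1 := fun i hi => by
    have h := hψ (cs.simple i) (cs.simple i)
    rw [← cs.wordProd_singleton, hTw [i] (cs.isReduced_singleton i), Tword_singleton, hi,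
      TOp_one_left, hP0] at h
    simp at h
  obtain ⟨ω, hω, rfl⟩ := cs.exists_isReduced w
  have hker : reducedSubwordSpan cs a ω ≤
      (AddMonoidHom.mk' (Pair · (ψ v)) fun x y => hPadd x y _).ker := by
    refine (AddSubgroup.closure_le _).2 ?_
    rintro _ ⟨q, τ, hτ, hτω, rfl⟩
    have hne : v ≠ cs.wordProd τ := fun h => hvw ⟨ω, hω, rfl, τ, hτω, h.symm⟩
    simp [hPmul, ← hTw τ hτ, hψ, hne]
  rw [← hPgrp _ (ψ v)]
  exact hker (grpOp_wordProd_mem_reducedSubwordSpan hT ha ω)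

end
end

section
/- For nonnegative integers a', b and integer c ≥ 1, Σ_{k=0}^b (-1)^k binom(a'+b+c, b-k) binom(c-1+k, k) = binom(a'+b, b). -/
/-!
Upper negation gives `(-1)^k C(c-1+k, k) = C(-c, k)`, so the sum is the Chu–Vandermonde
convolution `Σ C(a'+b+c, b-k) C(-c, k) = C((a'+b+c) + (-c), b)` over the integers.
-/

open Finset

theorem Ring.choose_neg_natCast {c : ℕ} (hc : 1 ≤ c) (k : ℕ) :
    Ring.choose (-(c : ℤ)) k = (-1) ^ k * (c - 1 + k).choose k := by
  rw [Ring.choose_neg, Units.smul_def, Int.coe_negOnePow_natCast, smul_eq_mul,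
    ← Ring.choose_natCast]
  push_cast [hc]
  ring_nf

theorem binomial_identity (a' b c : ℕ) (hc : 1 ≤ c) :
    ∑ k ∈ Finset.range (b + 1),
        (-1 : ℤ) ^ k * ((a' + b + c).choose (b - k)) * ((c - 1 + k).choose k)
      = (a' + b).choose b := by
  have hsplit : ((a' + b : ℕ) : ℤ) = (a' + b + c : ℕ) + -(c : ℤ) := by push_cast; ring
  rw [← Ring.choose_natCast, hsplit, Ring.add_choose_eq _ (Commute.all _ _),
    ← Nat.sum_antidiagonal_swap, Nat.sum_antidiagonal_eq_sum_range_succ_mk]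
  refine sum_congr rfl fun k _ => ?_
  rw [Prod.swap_prod_mk, Ring.choose_natCast, Ring.choose_neg_natCast hc]
  ring
end
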